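/- Let E be a vector space over a field K and let ψ be an order isomorphism of the poset of finite-dimensional subspaces of E onto itself. Then the map φ(N) = ⋃{ψ(M) : M ⊆ N, dim M < ∞} defines an automorphism of the lattice of all subspaces of E extending ψ. -/

import Mathlib

/-!
An element of a compactly generated lattice is the join of the compact elements below it, so an
automorphism `ψ` of the poset of compact elements has only one candidate extension:
`a ↦ ⨆ {ψ c | c ≤ a}`. Compactness of `c` turns `c ≤ ⨆ {ψ d | d ≤ a}` into `c ≤ ψ d` for a
single `d ≤ a` (the family is directed since compact elements are closed under `⊔`), i.e. into
`ψ⁻¹ c ≤ a`. Hence the extensions of `ψ` and `ψ⁻¹` are mutually inverse.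
-/

section CompactElements

variable {α : Type*} [CompleteLattice α]

theorem isCompactElement_bot : IsCompactElement (⊥ : α) := by
  simpa using CompleteLattice.isCompactElement_finsetSup (f := id) (∅ : Finset α) (by simp)

theorem IsCompactElement.sup {c d : α} (hc : IsCompactElement c) (hd : IsCompactElement d) :
    IsCompactElement (c ⊔ d) := by
  classical
  simpa using CompleteLattice.isCompactElement_finsetSup (f := id) {c, d} (by simp [hc, hd])

end CompactElements

section SupExtension

variable {α : Type*} [CompleteLattice α] {P : α → Prop}

def supExtension (ψ : {c // P c} ≃o {c // P c}) (a : α) : α :=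
  ⨆ (c : {c // P c}) (_ : c.1 ≤ a), (ψ c).1

theorem supExtension_mono (ψ : {c // P c} ≃o {c // P c}) : Monotone (supExtension ψ) :=
  fun _ _ hab => biSup_mono fun _ hc => hc.trans hab

theorem supExtension_val (ψ : {c // P c} ≃o {c // P c}) (c : {c // P c}) :
    supExtension ψ c.1 = (ψ c).1 :=
  le_antisymm (iSup₂_le fun _ hd => ψ.monotone hd)
    (le_iSup₂ (f := fun d (_ : d.1 ≤ c.1) => (ψ d).1) c le_rfl)

theorem le_supExtension_iff (hP : ∀ c, P c ↔ IsCompactElement c)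
    (ψ : {c // P c} ≃o {c // P c}) (c : {c // P c}) (a : α) :
    c.1 ≤ supExtension ψ a ↔ (ψ.symm c).1 ≤ a := by
  refine ⟨fun hle => ?_, fun hle => ?_⟩
  · set S := (fun d => (ψ d).1) '' {d | d.1 ≤ a}
    have hS : supExtension ψ a = sSup S := sSup_image.symm
    have hne : S.Nonempty := ⟨_, ⟨⊥, (hP ⊥).2 isCompactElement_bot⟩, bot_le, rfl⟩
    have hdir : DirectedOn (· ≤ ·) S := by
      rintro _ ⟨d₁, h₁, rfl⟩ _ ⟨d₂, h₂, rfl⟩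
      let d : {c // P c} := ⟨d₁.1 ⊔ d₂.1, (hP _).2 (((hP _).1 d₁.2).sup ((hP _).1 d₂.2))⟩
      exact ⟨_, ⟨d, sup_le h₁ h₂, rfl⟩,
        ψ.monotone (show d₁ ≤ d from le_sup_left), ψ.monotone (show d₂ ≤ d from le_sup_right)⟩
    obtain ⟨_, ⟨d, hda, rfl⟩, hcd⟩ :=
      ((CompleteLattice.isCompactElement_iff_le_of_directed_sSup_le (k := c.1)).1 ((hP _).1 c.2))
        S hne hdir (hS ▸ hle)
    exact le_trans (show (ψ.symm c).1 ≤ d.1 from ψ.symm_apply_le.2 hcd) hda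
  · calc c.1 = (ψ (ψ.symm c)).1 := by rw [ψ.apply_symm_apply]
      _ ≤ supExtension ψ a := le_iSup₂ (f := fun d (_ : d.1 ≤ a) => (ψ d).1) _ hle

theorem supExtension_symm_supExtension [IsCompactlyGenerated α]
    (hP : ∀ c, P c ↔ IsCompactElement c) (ψ : {c // P c} ≃o {c // P c}) (a : α) :
    supExtension ψ.symm (supExtension ψ a) = a := by
  have key (c : {c // P c}) : c.1 ≤ supExtension ψ.symm (supExtension ψ a) ↔ c.1 ≤ a := by
    rw [le_supExtension_iff hP, ψ.symm_symm, le_supExtension_iff hP, ψ.symm_apply_apply]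
  refine le_antisymm ?_ ?_ <;> refine le_iff_compact_le_imp.2 fun c hc hca => ?_
  · exact (key ⟨c, (hP c).2 hc⟩).1 hca
  · exact (key ⟨c, (hP c).2 hc⟩).2 hca

def supExtensionIso [IsCompactlyGenerated α] (hP : ∀ c, P c ↔ IsCompactElement c)
    (ψ : {c // P c} ≃o {c // P c}) : α ≃o α where
  toFun := supExtension ψ
  invFun := supExtension ψ.symm
  left_inv := supExtension_symm_supExtension hP ψ
  right_inv := supExtension_symm_supExtension hP ψ.symm
  map_rel_iff' {a b} := by
    change supExtension ψ a ≤ supExtension ψ b ↔ a ≤ b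
    refine ⟨fun h => ?_, fun h => supExtension_mono ψ h⟩
    simpa only [supExtension_symm_supExtension hP] using supExtension_mono ψ.symm h

end SupExtension

theorem Submodule.finiteDimensional_iff_isCompactElement {K E : Type*} [DivisionRing K]
    [AddCommGroup E] [Module K E] (M : Submodule K E) :
    FiniteDimensional K M ↔ IsCompactElement M :=
  (fg_iff_finiteDimensional M).symm.trans (fg_iff_compact M)

theorem stmt_13 {K E : Type*} [Field K] [AddCommGroup E] [Module K E]
    (ψ : {M : Submodule K E // FiniteDimensional K M} ≃o
          {M : Submodule K E // FiniteDimensional K M}) :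
    ∃ Φ : Submodule K E ≃o Submodule K E,
      (∀ N : Submodule K E,
        Φ N = ⨆ (M : {M : Submodule K E // FiniteDimensional K M}) (_ : M.1 ≤ N),
          (ψ M).1) ∧
      ∀ M : {M : Submodule K E // FiniteDimensional K M}, Φ M.1 = (ψ M).1 :=
  ⟨supExtensionIso Submodule.finiteDimensional_iff_isCompactElement ψ, fun _ => rfl,
    supExtension_val ψ⟩
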